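/- Let T be a finite orientation of a tree. Then T is a core (every endomorphism is an automorphism) if and only if the identity is the only endomorphism of T. -/

import Mathlib

/-!
A non-identity automorphism `φ` of an oriented tree can be turned into a non-injective
endomorphism. Every automorphism of a finite tree fixes a vertex or swaps the two ends of an
edge, and the latter is impossible for an orientation. So `φ` fixes some `p` and moves a
neighbour `a` of `p`; applying `φ` on the branch of `T - pa` containing `a` and the identity
elsewhere is an endomorphism that identifies `a` with `φ a`.

For the fixed-point statement, take a path `P` from `v` to `φ v`. In a finite tree the paths
`P`, `φ P`, `φ² P`, … cannot concatenate to a path, so `φ` maps the second vertex of `P` to its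
penultimate one; the interior of `P` is then a path from a vertex `w` to `φ w` that is two
edges shorter, and we descend until the length is `0` (a fixed point) or `1` (a swapped edge).
-/

open Function

section

variable {V : Type*} {E : V → V → Prop} {φ : V → V}

theorem map_rel_piecewise_id (hφ : ∀ a b, E a b → E (φ a) (φ b)) (S : Set V)
    [DecidablePred (· ∈ S)] (hS : ∀ x y, x ∈ S → y ∉ S → E x y ∨ E y x → φ y = y) :
    ∀ a b, E a b → E (S.piecewise φ id a) (S.piecewise φ id b) := by
  intro a b hab
  by_cases ha : a ∈ S <;> by_cases hb : b ∈ S <;>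
    simp only [Set.piecewise_eq_of_mem, Set.piecewise_eq_of_notMem, ha, hb, not_false_eq_true,
      id]
  · exact hφ a b hab
  · simpa only [hS a b ha hb (.inl hab)] using hφ a b hab
  · simpa only [hS b a hb ha (.inr hab)] using hφ a b hab
  · exact hab

namespace SimpleGraph

variable {G : SimpleGraph V}

lemma Walk.snd_append_of_not_nil {u v w : V} {p : G.Walk u v} (hp : ¬p.Nil) (q : G.Walk v w) :
    (p.append q).snd = p.snd := by
  have hlen := not_nil_iff_lt_length.mp hp
  rw [snd, snd, getVert_append]
  split_ifs
  · rfl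
  · rw [p.getVert_of_length_le (by omega), Nat.sub_eq_zero_of_le (by omega), getVert_zero]

theorem IsAcyclic.isPath_append (hG : G.IsAcyclic) {u v w : V} {p : G.Walk u v}
    {q : G.Walk v w} (hp : p.IsPath) (hq : q.IsPath) (hpq : p.penultimate ≠ q.snd) :
    (p.append q).IsPath := by
  rw [hG.isPath_iff_isChain, Walk.edges_append]
  refine ((hG.isPath_iff_isChain p).1 hp).append ((hG.isPath_iff_isChain q).1 hq) ?_
  intro e he e' he'
  have hp' : p.edges ≠ [] := by rintro h; simp [h] at he
  have hq' : q.edges ≠ [] := by rintro h; simp [h] at he'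
  rw [List.getLast?_eq_some_getLast hp', Option.mem_some_iff] at he
  rw [List.head?_eq_some_head hq', Option.mem_some_iff] at he'
  subst he he'
  simp only [Walk.getLast_edges_eq_mk_penultimate_end, Walk.head_edges_eq_mk_start_snd, ne_eq,
    Sym2.eq_iff]
  grind

theorem IsAcyclic.penultimate_eq_map_snd [Finite V] (hG : G.IsAcyclic) (f : G →g G)
    (hf : Injective f) {v : V} {P : G.Walk v (f v)} (hP : P.IsPath) :
    P.penultimate = f P.snd := by
  -- otherwise `P`, `f P`, `f² P`, … concatenate to paths of unbounded length
  cases nonempty_fintype V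
  by_contra hback
  have hlen : P.length ≠ 0 := by
    intro h0
    have hv : f v = v := (P.eq_of_length_eq_zero h0).symm
    simp [Walk.getVert_of_length_le, h0, hv] at hback
  have axis : ∀ n : ℕ, ∃ Q : G.Walk v (f^[n + 1] v),
      Q.IsPath ∧ Q.length = (n + 1) * P.length ∧ Q.snd = P.snd := by
    intro n
    induction n with
    | zero => exact ⟨P, hP, by simp, rfl⟩
    | succ n ih =>
      obtain ⟨Q, hQ, hQlen, hQsnd⟩ := ih
      refine ⟨P.append ((Q.map f).copy rfl (iterate_succ_apply' f (n + 1) v).symm), ?_, ?_, ?_⟩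
      · refine hG.isPath_append hP ((Walk.isPath_copy _ _ _).2 (hQ.map hf)) ?_
        rwa [Walk.snd, Walk.getVert_copy, Walk.getVert_map, ← Walk.snd, hQsnd]
      · rw [Walk.length_append, Walk.length_copy, Walk.length_map, hQlen]
        ring
      · exact Walk.snd_append_of_not_nil (Walk.not_nil_iff_lt_length.2 (by omega)) _
  obtain ⟨Q, hQ, hQlen, -⟩ := axis (Fintype.card V)
  have := hQ.length_lt
  rw [hQlen] at this
  nlinarith [Nat.one_le_iff_ne_zero.2 hlen]

theorem IsAcyclic.exists_fixed_or_flip [Finite V] (hG : G.IsAcyclic) (f : G →g G)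
    (hf : Injective f) {v : V} (hv : G.Reachable v (f v)) :
    (∃ x, f x = x) ∨ ∃ x y, G.Adj x y ∧ f x = y ∧ f y = x := by
  obtain ⟨P, hP⟩ := hv.exists_isPath
  clear hv
  induction hk : P.length using Nat.strong_induction_on generalizing v with
  | _ k ih =>
  have hback := hG.penultimate_eq_map_snd f hf hP
  match k, hk with
  | 0, hk => exact .inl ⟨v, (P.eq_of_length_eq_zero hk).symm⟩
  | 1, hk =>
    have hsnd : P.snd = f v := P.getVert_of_length_le hk.le
    refine .inr ⟨v, f v, ?_, rfl, ?_⟩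
    · simpa [hsnd] using P.adj_snd (Walk.not_nil_iff_lt_length.2 (by omega))
    · simpa [Walk.penultimate, hk, hsnd] using hback.symm
  | k + 2, hk =>
    have hpen : P.tail.penultimate = f P.snd := by
      rw [← hback, Walk.penultimate, Walk.getVert_tail, Walk.length_tail]
      congr 1
      omega
    refine ih k (by omega) (P.tail.dropLast.copy rfl hpen) ?_ ?_
    · exact (Walk.isPath_copy _ _ _).2 hP.tail.dropLast
    · rw [Walk.length_copy, Walk.length_dropLast, Walk.length_tail, hk]
      rfl

theorem map_adj_of_map_rel (hGE : ∀ a b, G.Adj a b ↔ E a b ∨ E b a)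
    (hφ : ∀ a b, E a b → E (φ a) (φ b)) {a b : V} (hab : G.Adj a b) : G.Adj (φ a) (φ b) := by
  rw [hGE] at hab ⊢
  exact hab.imp (hφ a b) (hφ b a)

theorem IsAcyclic.exists_map_rel_not_injective
    (hGE : ∀ a b, G.Adj a b ↔ E a b ∨ E b a) (hac : G.IsAcyclic)
    (hφ : ∀ a b, E a b → E (φ a) (φ b)) {p a : V} (hpa : G.Adj p a) (hp : φ p = p) (ha : φ a ≠ a) :
    ∃ ψ : V → V, (∀ a b, E a b → E (ψ a) (ψ b)) ∧ ¬ Injective ψ := by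
  classical
  let S : Set V := {u | (G.deleteEdges {s(p, a)}).Reachable a u}
  have haS : a ∈ S := Reachable.refl a
  have hpS : p ∉ S := fun h => isAcyclic_iff_forall_adj_isBridge.1 hac hpa h.symm
  have hstep : ∀ x y, G.Adj x y → s(x, y) ≠ s(p, a) → x ∈ S → y ∈ S := fun x y hxy hne hx =>
    hx.trans ((deleteEdges_adj ..).2 ⟨hxy, hne⟩).reachable
  have hcross : ∀ x y, x ∈ S → y ∉ S → E x y ∨ E y x → φ y = y := by
    intro x y hx hy hxy
    have : s(x, y) = s(p, a) := by
      by_contra hne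
      exact hy (hstep x y ((hGE x y).2 hxy) hne hx)
    rcases Sym2.eq_iff.1 this with ⟨rfl, -⟩ | ⟨-, rfl⟩
    · exact absurd hx hpS
    · exact hp
  have hφa : φ a ∉ S := by
    have hadj : G.Adj (φ a) p := by simpa [hp] using (map_adj_of_map_rel hGE hφ hpa).symm
    refine fun h => hpS (hstep _ _ hadj ?_ h)
    rw [Ne, Sym2.eq_iff]
    rintro (⟨-, rfl⟩ | ⟨h, -⟩)
    exacts [hpa.ne rfl, ha h]
  refine ⟨S.piecewise φ id, map_rel_piecewise_id hφ S hcross, fun hinj => ha (hinj ?_).symm⟩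
  simp [haS, hφa]

end SimpleGraph

end

/-- Let `T` be a finite orientation of a tree (digraph `E` on `V` whose underlying
undirected graph `G` is a tree, each undirected edge oriented in exactly one
direction). Then `T` is a core (every endomorphism is an automorphism) iff the
identity is the only endomorphism of `T`. -/
theorem stmt13 {V : Type} [Fintype V] (E : V → V → Prop)
    (G : SimpleGraph V) (hG : ∀ a b, G.Adj a b ↔ (E a b ∨ E b a))
    (htree : G.IsTree)
    (hanti : ∀ a b, E a b → ¬ E b a) :
    (∀ φ : V → V, (∀ a b, E a b → E (φ a) (φ b)) →
        Function.Bijective φ ∧ ∀ a b, E (φ a) (φ b) → E a b) ↔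
    (∀ φ : V → V, (∀ a b, E a b → E (φ a) (φ b)) → φ = id) := by
  refine ⟨fun hcore φ hφ => ?_, fun hid φ hφ => ?_⟩
  · let f : G →g G := ⟨φ, SimpleGraph.map_adj_of_map_rel hG hφ⟩
    obtain ⟨v⟩ := htree.connected.nonempty
    rcases htree.isAcyclic.exists_fixed_or_flip f (hcore φ hφ).1.injective
      (htree.connected v (f v)) with ⟨p, hp⟩ | ⟨x, y, hxy, rfl, hyx⟩
    · by_contra hne
      obtain ⟨x, hx⟩ := Function.ne_iff.1 hne
      obtain ⟨d, -, hd, hd'⟩ :=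
        (htree.connected p x).some.exists_boundary_dart {y | φ y = y} hp hx
      obtain ⟨ψ, hψ, hψinj⟩ := htree.isAcyclic.exists_map_rel_not_injective hG hφ d.adj hd hd'
      exact hψinj (hcore ψ hψ).1.injective
    · replace hyx : φ (φ x) = x := hyx
      rcases (hG x (φ x)).1 hxy with h | h <;>
        exact absurd (by simpa only [hyx] using hφ _ _ h) (hanti _ _ h)
  · obtain rfl := hid φ hφ
    exact ⟨bijective_id, fun _ _ => id⟩
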